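/- arXiv:1501.05225 — 3 statements merged into one kernel-verified Lean document; each statement's English description precedes it below -/
import Mathlib

section
/- The BH index is a fixed point of the FastLSU counting map: #S(r_BH·α/m) = r_BH, i.e., exactly r_BH of the m p-values are strictly smaller than r_BH·α/m. -/
open scoped Classical

/-- `#S(t)`: the number of elements of the multiset `C` that are strictly less than `t`. -/
noncomputable def countBelow (C : Multiset ℝ) (t : ℝ) : ℕ :=
  (C.filter (fun p => p < t)).card

/-- The `k`-th smallest element (1-indexed order statistic, with multiplicity) of `D`. -/
noncomputable def orderStat (D : Multiset ℝ) (k : ℕ) : ℝ :=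
  (D.sort (· ≤ ·)).getD (k - 1) 0

/-- The Benjamini–Hochberg index at level `α`:
`max {i ∈ {1,…,m} : p_(i) < i·α/m}`, with value `0` if this set is empty. -/
noncomputable def rBH (α : ℝ) (C : Multiset ℝ) : ℕ :=
  ((Finset.Icc 1 C.card).filter
    (fun i => orderStat C i < (i : ℝ) * α / (C.card : ℝ))).sup id

/-! For sorted values, `p_(k) < t` holds exactly when at least `k` values lie below `t`. With
`r = r_BH` and `k = #S(r·α/m)` this gives `r ≤ k`; then `p_(k) < r·α/m ≤ k·α/m`, so `k` is
itself a BH candidate and `k ≤ r` by maximality. -/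

theorem List.Pairwise.getElem_lt_iff_lt_length_filter {α : Type*} [LinearOrder α] {L : List α}
    (hL : L.Pairwise (· ≤ ·)) (t : α) {i : ℕ} (hi : i < L.length) :
    L[i] < t ↔ i < (L.filter (· < t)).length := by
  induction L generalizing i with
  | nil => simp at hi
  | cons a l ih =>
    rw [List.pairwise_cons] at hL
    by_cases ha : a < t
    · rcases i with _ | j
      · simp [ha]
      · simp [ha, ih hL.2 (by simpa using hi)]
    · have hnone : ∀ x ∈ a :: l, ¬ x < t := by
        rintro x (_ | ⟨_, hx⟩)
        · exact ha
        · exact fun hxt => ha ((hL.1 x hx).trans_lt hxt)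
      have hnil : (a :: l).filter (· < t) = [] :=
        List.filter_eq_nil_iff.2 fun x hx => by simpa using hnone x hx
      simp only [hnil, List.length_nil, Nat.not_lt_zero, iff_false]
      exact hnone _ (List.getElem_mem hi)

theorem countBelow_le_card (C : Multiset ℝ) (t : ℝ) : countBelow C t ≤ C.card :=
  Multiset.card_le_card (Multiset.filter_le _ C)

theorem countBelow_eq_zero {C : Multiset ℝ} {t : ℝ} (h : ∀ p ∈ C, t ≤ p) :
    countBelow C t = 0 := by
  simpa [countBelow, Multiset.filter_eq_nil] using h

theorem orderStat_lt_iff_le_countBelow {C : Multiset ℝ} {k : ℕ} (hk1 : 1 ≤ k)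
    (hkC : k ≤ C.card) (t : ℝ) : orderStat C k < t ↔ k ≤ countBelow C t := by
  have hlen : k - 1 < (C.sort (· ≤ ·)).length := by rw [Multiset.length_sort]; omega
  have hcount : countBelow C t = ((C.sort (· ≤ ·)).filter (· < t)).length := by
    conv_lhs => rw [countBelow, ← Multiset.sort_eq C (· ≤ ·)]
    rw [Multiset.filter_coe, Multiset.coe_card]
  rw [orderStat, List.getD_eq_getElem _ _ hlen, hcount,
    (C.pairwise_sort _).getElem_lt_iff_lt_length_filter t hlen]
  omega

theorem le_rBH {α : ℝ} {C : Multiset ℝ} {k : ℕ} (hk1 : 1 ≤ k) (hkC : k ≤ C.card)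
    (hk : orderStat C k < k * α / C.card) : k ≤ rBH α C :=
  Finset.le_sup (f := id) (Finset.mem_filter.2 ⟨Finset.mem_Icc.2 ⟨hk1, hkC⟩, hk⟩)

theorem rBH_spec {α : ℝ} {C : Multiset ℝ} (h : rBH α C ≠ 0) :
    1 ≤ rBH α C ∧ rBH α C ≤ C.card ∧ orderStat C (rBH α C) < rBH α C * α / C.card := by
  have hne : ((Finset.Icc 1 C.card).filter
      (fun i => orderStat C i < (i : ℝ) * α / (C.card : ℝ))).Nonempty := by
    contrapose! h
    simp [rBH, h]
  obtain ⟨i, hi, hsup⟩ := Finset.exists_mem_eq_sup _ hne id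
  rw [rBH, hsup]
  simpa [and_assoc] using hi

theorem rBH_fixedPoint_general
    (α : ℝ) (hα0 : 0 < α)
    (C : Multiset ℝ) (hC : ∀ p ∈ C, 0 ≤ p ∧ p ≤ 1)
    (m : ℕ) (hm : m = C.card) :
    countBelow C ((rBH α C : ℝ) * α / (m : ℝ)) = rBH α C := by
  subst hm
  set r := rBH α C
  rcases eq_or_ne r 0 with hr0 | hr0
  · rw [hr0, Nat.cast_zero, zero_mul, zero_div]
    exact countBelow_eq_zero fun p hp => (hC p hp).1
  obtain ⟨hr1, hrC, hr⟩ := rBH_spec hr0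
  set k := countBelow C (r * α / C.card)
  have hrk : r ≤ k := (orderStat_lt_iff_le_countBelow hr1 hrC _).1 hr
  have hk : orderStat C k < k * α / C.card := calc
    orderStat C k < r * α / C.card :=
      (orderStat_lt_iff_le_countBelow (hr1.trans hrk) (countBelow_le_card C _) _).2 le_rfl
    _ ≤ k * α / C.card := by gcongr
  exact le_antisymm (le_rBH (hr1.trans hrk) (countBelow_le_card C _) hk) hrk

/-- The BH index is a fixed point of the FastLSU counting map:
`#S(r_BH·α/m) = r_BH`, i.e., exactly `r_BH` of the `m` p-values are strictly smaller
than `r_BH·α/m`. -/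
theorem rBH_fixedPoint
    (α : ℝ) (hα0 : 0 < α) (hα1 : α < 1)
    (C : Multiset ℝ) (hC : ∀ p ∈ C, 0 ≤ p ∧ p ≤ 1)
    (m : ℕ) (hm : m = C.card) :
    countBelow C ((rBH α C : ℝ) * α / (m : ℝ)) = rBH α C :=
  rBH_fixedPoint_general α hα0 C hC m hm
end

section
/- FastLSU may be started from any upper bound on the BH index: for every integer s with r_BH ≤ s ≤ m, the sequence defined by r_0 = s and r_{k+1} = #S(r_k·α/m) is nonincreasing, stays at least r_BH, stabilizes after at most m steps, and its stabilized value equals r_BH. -/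
open scoped Classical

/-! With `f i = #S(i·α/m)`, `f` is monotone and `p_(i) < i·α/m ↔ i ≤ f i`, so `r_BH` is the
greatest post-fixed point of `f` (post-fixed points of a monotone map are closed under `max`).
Above it `f i ≤ i`, since otherwise `i + 1` would be post-fixed, and `f` preserves `r_BH ≤ ·`.
Hence the iteration decreases, must stop within `s ≤ m` steps, and a fixed point `≥ r_BH`
is post-fixed, hence equal to `r_BH`. -/

theorem List.Pairwise.lt_length_filter_lt_iff {α : Type*} [LinearOrder α] {L : List α}
    (hL : L.Pairwise (· ≤ ·)) (t : α) {i : ℕ} (hi : i < L.length) :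
    i < (L.filter (· < t)).length ↔ L[i] < t := by
  constructor
  · intro hlen
    by_contra! hge
    have hdrop : (L.drop i).filter (· < t) = [] := by
      rw [List.drop_eq_getElem_cons hi]
      have hcons := List.drop_eq_getElem_cons hi ▸ hL.drop (i := i)
      simp only [List.filter_eq_nil_iff, List.mem_cons, decide_eq_true_eq, not_lt]
      rintro a (rfl | ha)
      · exact hge
      · exact hge.trans (List.rel_of_pairwise_cons hcons ha)
    have : (L.filter (· < t)).length ≤ i := by
      rw [← L.take_append_drop i, List.filter_append, hdrop, List.append_nil]
      exact (List.length_filter_le _ _).trans (List.length_take_le _ _)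
    omega
  · intro hlt
    have htake : (L.take (i + 1)).filter (· < t) = L.take (i + 1) := by
      rw [List.filter_eq_self]
      intro a ha
      obtain ⟨j, hj, rfl⟩ := List.mem_take_iff_getElem.mp ha
      have hji : L[j] ≤ L[i] :=
        hL.rel_get_of_le (a := ⟨j, by omega⟩) (b := ⟨i, hi⟩) (by simp; omega)
      exact decide_eq_true (hji.trans_lt hlt)
    calc i < (L.take (i + 1)).length := by rw [List.length_take]; omega
      _ = ((L.take (i + 1)).filter (· < t)).length := by rw [htake]
      _ ≤ (L.filter (· < t)).length := ((L.take_sublist _).filter _).length_le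

theorem countBelow_eq_length_filter_sort (C : Multiset ℝ) (t : ℝ) :
    countBelow C t = ((C.sort (· ≤ ·)).filter (· < t)).length := by
  conv_lhs => rw [← C.sort_eq (· ≤ ·)]
  rfl

theorem le_countBelow_iff {C : Multiset ℝ} {k : ℕ} (hk : 1 ≤ k) (hkC : k ≤ C.card) (t : ℝ) :
    k ≤ countBelow C t ↔ orderStat C k < t := by
  have hlen : k - 1 < (C.sort (· ≤ ·)).length := by rw [Multiset.length_sort]; omega
  rw [orderStat, List.getD_eq_getElem _ _ hlen, countBelow_eq_length_filter_sort,
    ← (C.pairwise_sort (· ≤ ·)).lt_length_filter_lt_iff t hlen]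
  omega

theorem exists_le_eq_succ_of_succ_le {r : ℕ → ℕ} (hr : ∀ k, r (k + 1) ≤ r k) :
    ∃ k ≤ r 0, r k = r (k + 1) := by
  by_contra! hne
  have hdesc : ∀ k ≤ r 0 + 1, r k + k ≤ r 0 := by
    intro k hk
    induction k with
    | zero => simp
    | succ k ih =>
      have := hne k (by omega)
      have := hr k
      have := ih (by omega)
      omega
  have := hdesc (r 0 + 1) le_rfl
  omega

theorem Monotone.isGreatest_sup_filter_le_apply {f : ℕ → ℕ} (hf : Monotone f) {n : ℕ}
    (hfn : ∀ i, f i ≤ n) :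
    IsGreatest {i | i ≤ f i} (((Finset.Icc 1 n).filter (fun i => i ≤ f i)).sup id) := by
  refine ⟨Finset.sup_mem {i | i ≤ f i} (Nat.zero_le _) ?_ _ _
    fun i hi => (Finset.mem_filter.mp hi).2, fun i hi => ?_⟩
  · intro x hx y hy
    exact sup_le (hx.trans (hf le_sup_left)) (hy.trans (hf le_sup_right))
  · rcases Nat.eq_zero_or_pos i with rfl | hpos
    · exact Nat.zero_le _
    · exact Finset.le_sup (f := id)
        (Finset.mem_filter.mpr ⟨Finset.mem_Icc.mpr ⟨hpos, le_trans hi (hfn i)⟩, hi⟩)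

theorem Monotone.apply_le_of_isGreatest_le {f : ℕ → ℕ} (hf : Monotone f) {R : ℕ}
    (hR : IsGreatest {i | i ≤ f i} R) {i : ℕ} (hi : R ≤ i) : f i ≤ i := by
  by_contra! hlt
  have := hR.2 (show i + 1 ≤ f (i + 1) from hlt.trans_le (hf (Nat.le_succ i)))
  omega

theorem countBelow_mono (C : Multiset ℝ) : Monotone (countBelow C) := fun _ _ hst =>
  Multiset.card_le_card (Multiset.monotone_filter_right _ fun _ hp => hp.trans_le hst)

noncomputable def fastLSUStep (α : ℝ) (C : Multiset ℝ) (i : ℕ) : ℕ :=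
  countBelow C (i * α / C.card)

theorem fastLSUStep_mono {α : ℝ} (hα : 0 ≤ α) (C : Multiset ℝ) : Monotone (fastLSUStep α C) :=
  fun _ _ hij => countBelow_mono C (by gcongr)

theorem rBH_eq_sup_filter_le_fastLSUStep (α : ℝ) (C : Multiset ℝ) :
    rBH α C = ((Finset.Icc 1 C.card).filter (fun i => i ≤ fastLSUStep α C i)).sup id := by
  refine congrArg (Finset.sup · id) (Finset.filter_congr fun i hi => ?_)
  obtain ⟨hi1, hiC⟩ := Finset.mem_Icc.mp hi
  exact (le_countBelow_iff hi1 hiC _).symm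

theorem isGreatest_rBH {α : ℝ} (hα : 0 ≤ α) (C : Multiset ℝ) :
    IsGreatest {i | i ≤ fastLSUStep α C i} (rBH α C) :=
  rBH_eq_sup_filter_le_fastLSUStep α C ▸
    (fastLSUStep_mono hα C).isGreatest_sup_filter_le_apply fun _ => countBelow_le_card C _

theorem fastLSU_from_upper_bound_general
    (α : ℝ) (hα0 : 0 < α)
    (C : Multiset ℝ)
    (m : ℕ) (hm : m = C.card)
    (s : ℕ) (hs1 : rBH α C ≤ s) (hs2 : s ≤ m)
    (r : ℕ → ℕ) (hr0 : r 0 = s)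
    (hr : ∀ k, r (k + 1) = countBelow C ((r k : ℝ) * α / (m : ℝ))) :
    (∀ k, r (k + 1) ≤ r k) ∧
    (∀ k, rBH α C ≤ r k) ∧
    (∃ k ≤ m, r k = r (k + 1)) ∧
    (∀ k, r k = r (k + 1) → r k = rBH α C) := by
  subst hm
  have hstep : ∀ k, r (k + 1) = fastLSUStep α C (r k) := hr
  have hmono := fastLSUStep_mono hα0.le C
  have hR := isGreatest_rBH hα0.le C
  have hlower : ∀ k, rBH α C ≤ r k := by
    intro k
    induction k with
    | zero => exact hr0 ▸ hs1
    | succ k ih => exact hstep k ▸ hR.1.trans (hmono ih)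
  have hdesc : ∀ k, r (k + 1) ≤ r k := fun k =>
    hstep k ▸ hmono.apply_le_of_isGreatest_le hR (hlower k)
  refine ⟨hdesc, hlower, ?_, fun k hfix => le_antisymm (hR.2 ?_) (hlower k)⟩
  · obtain ⟨k, hk, hfix⟩ := exists_le_eq_succ_of_succ_le hdesc
    exact ⟨k, hk.trans (hr0 ▸ hs2), hfix⟩
  · exact (hfix.trans (hstep k)).le

/-- FastLSU may be started from any upper bound on the BH index: for every
integer `s` with `r_BH ≤ s ≤ m`, the sequence defined by `r 0 = s` and
`r (k+1) = #S(r k · α/m)` is nonincreasing, stays at least `r_BH`, stabilizes after at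
most `m` steps, and its stabilized value equals `r_BH`. -/
theorem fastLSU_from_upper_bound
    (α : ℝ) (hα0 : 0 < α) (hα1 : α < 1)
    (C : Multiset ℝ) (hC : ∀ p ∈ C, 0 ≤ p ∧ p ≤ 1)
    (m : ℕ) (hm : m = C.card)
    (s : ℕ) (hs1 : rBH α C ≤ s) (hs2 : s ≤ m)
    (r : ℕ → ℕ) (hr0 : r 0 = s)
    (hr : ∀ k, r (k + 1) = countBelow C ((r k : ℝ) * α / (m : ℝ))) :
    (∀ k, r (k + 1) ≤ r k) ∧
    (∀ k, rBH α C ≤ r k) ∧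
    (∃ k ≤ m, r k = r (k + 1)) ∧
    (∀ k, r k = r (k + 1) → r k = rBH α C) :=
  fastLSU_from_upper_bound_general α hα0 C m hm s hs1 hs2 r hr0 hr
end

section
/- Per-chunk upper bound on the global BH index (inequality (4) of the paper): let C be the disjoint union of chunks C_1,…,C_c with |C_i| = m_i and |C| = m, let r_C = max{i ∈ {1,…,m} : p_(i:C) < i·α/m} (0 if none), and for each chunk let r*_{C_i} = max{r ∈ {1,…,m_i} : p_(r:C_i) < (r + m − m_i)·α/m} (0 if none). Then r_C ≤ r*_{C_i} + m − m_i for every i = 1,…,c. -/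
open scoped Classical

/-- The chunk-level BH index of the chunk `D` inside a total problem of `m` p-values:
`max {r ∈ {1,…,|D|} : p_(r:D) < (r + m − |D|)·α/m}`, with value `0` if this set is empty. -/
noncomputable def rStarChunk (α : ℝ) (m : ℕ) (D : Multiset ℝ) : ℕ :=
  ((Finset.Icc 1 D.card).filter
    (fun r => orderStat D r < ((r + m - D.card : ℕ) : ℝ) * α / (m : ℝ))).sup id

/-! Let `r = r_C` and `t = r·α/m`. At least `r` of the p-values of `C` lie below `t`, and at most
`m − m_i` of them lie outside the chunk `C_i`, so at least `k = r − (m − m_i)` of them lie in `C_i`.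
That is `p_(k:C_i) < t = (k + m − m_i)·α/m`, hence `k ≤ r*_{C_i}`. -/

theorem List.Pairwise.getElem_lt_iff_lt_countP {α : Type*} [LinearOrder α] {l : List α}
    (hl : l.Pairwise (· ≤ ·)) {i : ℕ} (hi : i < l.length) (t : α) :
    l[i] < t ↔ i < l.countP (· < t) := by
  induction l generalizing i with
  | nil => simp at hi
  | cons a l ih =>
    rw [List.pairwise_cons] at hl
    by_cases ha : a < t
    · cases i with
      | zero => simp [ha]
      | succ j => simp [ha, ih hl.2 (Nat.lt_of_succ_lt_succ hi)]
    · have hge : ∀ x ∈ l, ¬ x < t := fun x hx => not_lt.2 ((not_lt.1 ha).trans (hl.1 x hx))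
      have hzero : l.countP (· < t) = 0 := List.countP_eq_zero.2 (by simpa using hge)
      cases i with
      | zero => simp [ha, hzero]
      | succ j => simp [ha, hzero, hge _ (List.getElem_mem _)]

theorem orderStat_lt_iff {D : Multiset ℝ} {r : ℕ} (hr1 : 1 ≤ r) (hr : r ≤ D.card) (t : ℝ) :
    orderStat D r < t ↔ r ≤ countBelow D t := by
  have hlen : r - 1 < (D.sort (· ≤ ·)).length := by rw [Multiset.length_sort]; omega
  have hcount : countBelow D t = (D.sort (· ≤ ·)).countP (· < t) := by
    rw [countBelow, ← Multiset.countP_eq_card_filter, ← Multiset.coe_countP, Multiset.sort_eq]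
  rw [orderStat, List.getD_eq_getElem _ _ hlen,
    (Multiset.pairwise_sort D _).getElem_lt_iff_lt_countP hlen, hcount]
  omega

theorem countBelow_le_of_le {D C : Multiset ℝ} (h : D ≤ C) (t : ℝ) :
    countBelow C t ≤ countBelow D t + (C.card - D.card) := by
  obtain ⟨E, rfl⟩ := Multiset.le_iff_exists_add.1 h
  simp only [countBelow, Multiset.filter_add, Multiset.card_add, add_tsub_cancel_left]
  exact Nat.add_le_add_left (Multiset.card_le_card (Multiset.filter_le _ _)) _

theorem rBH_eq_zero_or_orderStat_lt (α : ℝ) (C : Multiset ℝ) :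
    rBH α C = 0 ∨ 1 ≤ rBH α C ∧ rBH α C ≤ C.card ∧
      orderStat C (rBH α C) < rBH α C * α / C.card := by
  rcases Finset.eq_empty_or_nonempty ((Finset.Icc 1 C.card).filter
      (fun i => orderStat C i < (i : ℝ) * α / (C.card : ℝ))) with hs | hs
  · left; simp [rBH, hs]
  · obtain ⟨r, hr, hsup⟩ := Finset.exists_mem_eq_sup _ hs id
    right
    rw [rBH, hsup]
    simpa [and_assoc] using hr

theorem le_rStarChunk {α : ℝ} {m : ℕ} {D : Multiset ℝ} {k : ℕ} (hk1 : 1 ≤ k) (hk : k ≤ D.card)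
    (hlt : orderStat D k < ((k + m - D.card : ℕ) : ℝ) * α / m) : k ≤ rStarChunk α m D :=
  Finset.le_sup (f := id) (Finset.mem_filter.2 ⟨Finset.mem_Icc.2 ⟨hk1, hk⟩, hlt⟩)

theorem rBH_le_rStarChunk_add (α : ℝ) {D C : Multiset ℝ} (hD : D ≤ C) :
    rBH α C ≤ rStarChunk α C.card D + C.card - D.card := by
  have hcard : D.card ≤ C.card := Multiset.card_le_card hD
  rcases rBH_eq_zero_or_orderStat_lt α C with h0 | ⟨hr1, hrm, hlt⟩
  · omega
  set r := rBH α C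
  set m := C.card
  have hcount : r ≤ countBelow D (r * α / m) + (m - D.card) :=
    ((orderStat_lt_iff hr1 hrm _).1 hlt).trans (countBelow_le_of_le hD _)
  by_cases hsmall : r ≤ m - D.card
  · omega
  have hk : r - (m - D.card) ≤ rStarChunk α m D := by
    refine le_rStarChunk (by omega) (by omega) ?_
    rw [show r - (m - D.card) + m - D.card = r by omega]
    exact (orderStat_lt_iff (by omega) (by omega) _).2 (by omega)
  omega

theorem global_rBH_le_chunk_bound_general
    (α : ℝ)
    (c : ℕ) (Ch : Fin c → Multiset ℝ)
    (C : Multiset ℝ) (hC : C = ∑ i, Ch i)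
    (m : ℕ) (hm : m = C.card) :
    ∀ i : Fin c, rBH α C ≤ rStarChunk α m (Ch i) + m - (Ch i).card := by
  intro i
  subst hC hm
  exact rBH_le_rStarChunk_add α
    (Finset.single_le_sum (fun j _ => Multiset.zero_le (Ch j)) (Finset.mem_univ i))

/-- Per-chunk upper bound on the global BH index (inequality (4) of the
paper): if `C` is the disjoint union of the chunks `Ch 1, …, Ch c`, then
`r_C ≤ r*_{C_i} + m − m_i` for every chunk `i`. -/
theorem global_rBH_le_chunk_bound
    (α : ℝ) (hα0 : 0 < α) (hα1 : α < 1)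
    (c : ℕ) (Ch : Fin c → Multiset ℝ)
    (hvals : ∀ i, ∀ p ∈ Ch i, 0 ≤ p ∧ p ≤ 1)
    (C : Multiset ℝ) (hC : C = ∑ i, Ch i)
    (m : ℕ) (hm : m = C.card) :
    ∀ i : Fin c, rBH α C ≤ rStarChunk α m (Ch i) + m - (Ch i).card :=
  global_rBH_le_chunk_bound_general α c Ch C hC m hm
end
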